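/- arXiv:2308.05041 — 2 statements merged into one kernel-verified Lean document; each statement's English description precedes it below -/
import Mathlib

section
/- Fix an even integer L ≥ 6 and let Λ be the L×L toric grid graph. If a hard-core configuration σ satisfies ΔH(σ) < L, then there exists a path ω from σ to e or to o with Φ_ω ≤ H(σ)+1. In particular, Φ(σ,e) < H(e)+L+1 or Φ(σ,o) < H(e)+L+1, i.e. σ belongs to the initial cycle C_e or to the initial cycle C_o. -/
namespace HardCoreGrid

/-- Sites of the `L × L` toric grid graph. -/
abbrev Site (L : ℕ) := ZMod L × ZMod L

/-- Two sites are adjacent iff they differ by `±1` in exactly one coordinate (mod `L`). -/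
def adjacent (L : ℕ) (v w : Site L) : Prop :=
  (v.2 = w.2 ∧ (v.1 = w.1 + 1 ∨ w.1 = v.1 + 1)) ∨
  (v.1 = w.1 ∧ (v.2 = w.2 + 1 ∨ w.2 = v.2 + 1))

/-- A site is even iff the sum of its two coordinates is even. -/
def isEvenSite (L : ℕ) (v : Site L) : Prop := (v.1 + v.2).val % 2 = 0

instance decIsEvenSite (L : ℕ) (v : Site L) : Decidable (isEvenSite L v) :=
  inferInstanceAs (Decidable ((v.1 + v.2).val % 2 = 0))

/-- The set of even sites. -/
def Ve (L : ℕ) : Set (Site L) := {v | isEvenSite L v}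

/-- The set of odd sites. -/
def Vo (L : ℕ) : Set (Site L) := {v | ¬ isEvenSite L v}

/-- External boundary of a set of sites. -/
def extBoundary (L : ℕ) (A : Set (Site L)) : Set (Site L) :=
  {v | v ∉ A ∧ ∃ w ∈ A, adjacent L v w}

/-- The set `S_{ℓ₁,ℓ₂}(η)` of odd sites of a rhombus. -/
def Sset (L : ℕ) (η : Site L) (ℓ₁ ℓ₂ : ℕ) : Set (Site L) :=
  {v | ∃ k < ℓ₁, ∃ j < ℓ₂,
    v = (η.1 + (k : ZMod L) + (j : ZMod L), η.2 + (k : ZMod L) - (j : ZMod L))}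

/-- Non-degenerate odd rhombus `R_{ℓ₁,ℓ₂}(η) = S ∪ ∂⁺S`. -/
def rhombusND (L : ℕ) (η : Site L) (ℓ₁ ℓ₂ : ℕ) : Set (Site L) :=
  Sset L η ℓ₁ ℓ₂ ∪ extBoundary L (Sset L η ℓ₁ ℓ₂)

/-- Degenerate rhombus `R_{ℓ,0}(η)` (direction `(1,-1)`). -/
def degRhombus10 (L : ℕ) (η : Site L) (ℓ : ℕ) : Set (Site L) :=
  {w | ∃ k ≤ ℓ, w = (η.1 + (k : ZMod L), η.2 - (k : ZMod L))}

/-- Degenerate rhombus `R_{0,ℓ}(η)` (direction `(1,1)`). -/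
def degRhombus01 (L : ℕ) (η : Site L) (ℓ : ℕ) : Set (Site L) :=
  {w | ∃ k ≤ ℓ, w = (η.1 + (k : ZMod L), η.2 + (k : ZMod L))}

/-- General odd rhombus (including the degenerate ones). -/
def IsOddRhombus (L : ℕ) (R : Set (Site L)) : Prop :=
  (∃ η ∈ Vo L, ∃ ℓ₁, 1 ≤ ℓ₁ ∧ ℓ₁ ≤ L ∧ ∃ ℓ₂, 1 ≤ ℓ₂ ∧ ℓ₂ ≤ L ∧
    R = rhombusND L η ℓ₁ ℓ₂) ∨
  (∃ η ∈ Ve L, ∃ ℓ ≤ L, R = degRhombus10 L η ℓ) ∨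
  (∃ η ∈ Ve L, ∃ ℓ ≤ L, R = degRhombus01 L η ℓ)

/-- Edges between `A` and its complement (oriented from inside). -/
def boundaryPairs (L : ℕ) (A : Set (Site L)) : Set (Site L × Site L) :=
  {p | p.1 ∈ A ∧ p.2 ∉ A ∧ adjacent L p.1 p.2}

/-- Perimeter: number of edges with exactly one endpoint in `A`. -/
noncomputable def perimeter (L : ℕ) (A : Set (Site L)) : ℕ :=
  (boundaryPairs L A).ncard

/-- Two distinct even sites at graph distance two. -/
def evenAdj (L : ℕ) (a b : Site L) : Prop :=
  a ∈ Ve L ∧ b ∈ Ve L ∧ a ≠ b ∧ ∃ w, adjacent L a w ∧ adjacent L w b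

/-- Odd cluster: odd sites bring their four neighbours, and the even part is
connected in the distance-two graph on even sites. -/
def IsOddCluster (L : ℕ) (C : Set (Site L)) : Prop :=
  (∀ v ∈ C, v ∈ Vo L → ∀ w, adjacent L v w → w ∈ C) ∧
  (∀ a ∈ C ∩ Ve L, ∀ b ∈ C ∩ Ve L,
    Relation.ReflTransGen (fun x y => x ∈ C ∩ Ve L ∧ y ∈ C ∩ Ve L ∧ evenAdj L x y) a b)

/-- `R` is the surrounding rhombus of `C`: a minimal odd rhombus containing `C`. -/
def IsSurroundingRhombus (L : ℕ) (C R : Set (Site L)) : Prop :=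
  IsOddRhombus L R ∧ C ⊆ R ∧
  ∀ R', IsOddRhombus L R' → C ⊆ R' → R' ⊆ R → R' = R

/-- Hard-core configurations. -/
def IsConfig (L : ℕ) (σ : Site L → Bool) : Prop :=
  ∀ v w, adjacent L v w → ¬(σ v = true ∧ σ w = true)

/-- The configuration `e` occupying exactly the even sites. -/
def eCfg (L : ℕ) : Site L → Bool := fun v => decide (isEvenSite L v)

/-- The configuration `o` occupying exactly the odd sites. -/
def oCfg (L : ℕ) : Site L → Bool := fun v => ! decide (isEvenSite L v)

/-- The Hamiltonian `H(σ) = -#{occupied sites}`. -/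
noncomputable def energy (L : ℕ) (σ : Site L → Bool) : ℤ :=
  -(({v | σ v = true} : Set (Site L)).ncard : ℤ)

/-- Configurations differing in at most one site. -/
def stepRel (L : ℕ) (σ σ' : Site L → Bool) : Prop :=
  {v | σ v ≠ σ' v}.Subsingleton

/-- Configurations differing in exactly one site. -/
def stepRel1 (L : ℕ) (σ σ' : Site L → Bool) : Prop :=
  ∃ v, σ v ≠ σ' v ∧ ∀ w, σ w ≠ σ' w → w = v

/-- A path: a list of hard-core configurations, consecutive ones differing in
at most one site. -/
def IsPath (L : ℕ) (ω : List (Site L → Bool)) : Prop :=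
  (∀ ξ ∈ ω, IsConfig L ξ) ∧ ω.Chain' (stepRel L)

def IsPathFrom (L : ℕ) (ω : List (Site L → Bool)) (σ σ' : Site L → Bool) : Prop :=
  IsPath L ω ∧ ω.head? = some σ ∧ ω.getLast? = some σ'

/-- Odd region of a configuration: occupied odd sites and empty even sites. -/
def oddRegion (L : ℕ) (σ : Site L → Bool) : Set (Site L) :=
  {v | v ∈ Vo L ∧ σ v = true} ∪ {v | v ∈ Ve L ∧ σ v = false}

/-- Adjacency used to split the odd region into its connected components. -/
def regionAdj (L : ℕ) (A : Set (Site L)) (a b : Site L) : Prop :=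
  a ∈ A ∧ b ∈ A ∧ (adjacent L a b ∨ evenAdj L a b)

/-- `C` is a connected component of `A`. -/
def IsComponentOf (L : ℕ) (C A : Set (Site L)) : Prop :=
  ∃ v ∈ A, C = {w | Relation.ReflTransGen (regionAdj L A) v w}

/-- Number of occupied odd sites. -/
noncomputable def nOddOcc (L : ℕ) (σ : Site L → Bool) : ℕ :=
  ({v | v ∈ Vo L ∧ σ v = true} : Set (Site L)).ncard

/-- Number of occupied even sites. -/
noncomputable def nEvenOcc (L : ℕ) (σ : Site L → Bool) : ℕ :=
  ({v | v ∈ Ve L ∧ σ v = true} : Set (Site L)).ncard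

/-- `m(σ) = o(σ) - e(σ)`. -/
noncomputable def mval (L : ℕ) (σ : Site L → Bool) : ℤ :=
  (nOddOcc L σ : ℤ) - (nEvenOcc L σ : ℤ)

/-- A path is non-backtracking if it visits each manifold `V_m` at most once. -/
def NonBacktracking (L : ℕ) (ω : List (Site L → Bool)) : Prop :=
  ω.Pairwise (fun a b => mval L a ≠ mval L b)

/-- A diagonal of `C` broken in some `k ≥ 1` sites, in direction `d`. -/
def BrokenDiag (L : ℕ) (C : Set (Site L)) (d : Site L) : Prop :=
  ∃ k : ℕ, 1 ≤ k ∧ ∃ z : ℕ → Site L,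
    (∀ i < k, z i ∈ Vo L ∧ z i ∉ C) ∧
    (∀ i, i + 1 < k → z (i + 1) = z i + d) ∧
    z 0 - d ∈ C ∧ z (k - 1) + d ∈ C

/-- `C` has a broken (increasing or decreasing) diagonal. -/
def HasBrokenDiagonal (L : ℕ) (C : Set (Site L)) : Prop :=
  BrokenDiag L C (1, 1) ∨ BrokenDiag L C (1, -1)

/-- The `k` sites `z, z+d, …, z+(k-1)d`. -/
def barSet (L : ℕ) (z d : Site L) (k : ℕ) : Set (Site L) :=
  {w | ∃ i : ℕ, i < k ∧ w = z + i • d}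

/-- Diagonal bar of length `k`: `k` odd sites with consecutive ones differing
by `(1,1)`, or all by `(1,-1)`. -/
def IsDiagBar (L : ℕ) (B : Set (Site L)) (k : ℕ) : Prop :=
  ∃ z ∈ Vo L, B = barSet L z (1, 1) k ∨ B = barSet L z (1, -1) k

/-- Bar of length `k`: `k` odd sites in a single column, row or diagonal with
consecutive ones at distance 2. -/
def IsBar (L : ℕ) (B : Set (Site L)) (k : ℕ) : Prop :=
  ∃ z ∈ Vo L, B = barSet L z (0, 2) k ∨ B = barSet L z (2, 0) k ∨
    B = barSet L z (1, 1) k ∨ B = barSet L z (1, -1) k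

/-- Every site of `B` is at graph distance two from the set `S`. -/
def AttachedTo (L : ℕ) (B S : Set (Site L)) : Prop :=
  ∀ b ∈ B, b ∉ S ∧ (∀ s ∈ S, ¬ adjacent L b s) ∧
    ∃ s ∈ S, ∃ w, adjacent L b w ∧ adjacent L w s

/-- Number of odd sites of `C` in the column `x`. -/
noncomputable def colCount (L : ℕ) (C : Set (Site L)) (x : ZMod L) : ℕ :=
  ({v | v ∈ C ∧ v ∈ Vo L ∧ v.1 = x} : Set (Site L)).ncard

/-- Number of odd sites of `C` in the row `y`. -/
noncomputable def rowCount (L : ℕ) (C : Set (Site L)) (y : ZMod L) : ℕ :=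
  ({v | v ∈ C ∧ v ∈ Vo L ∧ v.2 = y} : Set (Site L)).ncard

/-- A set winds around the torus if it contains `L/2` odd sites in a single
column or row. -/
def Winds (L : ℕ) (C : Set (Site L)) : Prop :=
  (∃ x, L / 2 ≤ colCount L C x) ∨ (∃ y, L / 2 ≤ rowCount L C y)

/-- Monotone odd cluster. -/
def MonotoneCluster (L : ℕ) (C : Set (Site L)) : Prop :=
  ∃ R, IsSurroundingRhombus L C R ∧
    ((¬ Winds L R ∧ perimeter L C = perimeter L R) ∨
     (Winds L R ∧ perimeter L C = 4 * L))

/-- Antiknob: an odd site not in `C` with at least three neighbouring even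
sites in `C`. -/
def IsAntiknob (L : ℕ) (C : Set (Site L)) (z : Site L) : Prop :=
  z ∈ Vo L ∧ z ∉ C ∧
  3 ≤ ({w | adjacent L z w ∧ w ∈ Ve L ∧ w ∈ C} : Set (Site L)).ncard

/-- The set `C_ir(e,o)`. -/
def Cir (L : ℕ) : Set (Site L → Bool) :=
  {σ | IsConfig L σ ∧ ∃ η ∈ Vo L, ∃ v ∈ Ve L, ∃ D : Set (Site L),
    (D = degRhombus10 L v 1 ∨ D = degRhombus01 L v 1) ∧
    Disjoint (rhombusND L η (L / 2 - 1) (L / 2 - 1)) D ∧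
    (∀ a ∈ D, ∀ b ∈ rhombusND L η (L / 2 - 1) (L / 2 - 1), ¬ adjacent L a b) ∧
    (∃ a ∈ D, ∃ b ∈ rhombusND L η (L / 2 - 1) (L / 2 - 1), ∃ w,
      adjacent L a w ∧ adjacent L w b) ∧
    oddRegion L σ = rhombusND L η (L / 2 - 1) (L / 2 - 1) ∪ D}

/-- The set `C_gr(e,o)`. -/
def Cgr (L : ℕ) : Set (Site L → Bool) :=
  {σ | IsConfig L σ ∧ ∃ C : Set (Site L), ∃ v ∈ Ve L,
    IsOddCluster L C ∧ (C ∩ Vo L).Nonempty ∧ MonotoneCluster L C ∧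
    (∃ η ∈ Vo L, ∃ k, 1 ≤ k ∧ k ≤ L / 2 - 1 ∧ ∃ B,
      IsDiagBar L B k ∧ AttachedTo L B (Sset L η (L / 2 - 1) (L / 2 - 1)) ∧
      C = rhombusND L η (L / 2 - 1) (L / 2 - 1) ∪ B ∪ extBoundary L B) ∧
    v ∉ C ∧ (∃ z, IsAntiknob L C z ∧ adjacent L v z) ∧
    oddRegion L σ = C ∪ {v}}

/-- The set `C_cr(e,o)`. -/
def Ccr (L : ℕ) : Set (Site L → Bool) :=
  {σ | IsConfig L σ ∧ ∃ C : Set (Site L), ∃ v ∈ Ve L,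
    IsOddCluster L C ∧ (C ∩ Vo L).Nonempty ∧ MonotoneCluster L C ∧
    (∃ η ∈ Vo L, ∃ k, 1 ≤ k ∧ k ≤ L / 2 - 2 ∧ ∃ B,
      IsDiagBar L B k ∧ AttachedTo L B (Sset L η (L / 2 - 1) (L / 2)) ∧
      C = rhombusND L η (L / 2 - 1) (L / 2) ∪ B ∪ extBoundary L B) ∧
    v ∉ C ∧ (∃ z, IsAntiknob L C z ∧ adjacent L v z) ∧
    oddRegion L σ = C ∪ {v}}

/-- The set `C_sb(e,o)`. -/
def Csb (L : ℕ) : Set (Site L → Bool) :=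
  {σ | IsConfig L σ ∧ ∃ C : Set (Site L), ∃ d₁ d₂ : Site L,
    IsOddCluster L C ∧ (C ∩ Vo L).Nonempty ∧ MonotoneCluster L C ∧
    ((∃ x y₀ : ZMod L,
        C ∩ Vo L = {v | ∃ i : ℕ, i < L / 2 - 1 ∧ v = (x, y₀ + 2 * (i : ZMod L))}) ∨
     (∃ y x₀ : ZMod L,
        C ∩ Vo L = {v | ∃ i : ℕ, i < L / 2 - 1 ∧ v = (x₀ + 2 * (i : ZMod L), y)})) ∧
    d₁ ≠ d₂ ∧ d₁ ∈ Ve L ∧ d₂ ∈ Ve L ∧ d₁ ∉ C ∧ d₂ ∉ C ∧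
    (∃ z, IsAntiknob L C z ∧ adjacent L d₁ z ∧ adjacent L d₂ z) ∧
    oddRegion L σ = C ∪ {d₁, d₂}}

/-- The odd sites of an `m`-uple bridge (`m` contiguous columns or rows). -/
def bridgeOddSet (L : ℕ) (x : ZMod L) (m : ℕ) (vert : Bool) : Set (Site L) :=
  if vert then {v | v ∈ Vo L ∧ ∃ i : ℕ, i < m ∧ v.1 = x + (i : ZMod L)}
  else {v | v ∈ Vo L ∧ ∃ i : ℕ, i < m ∧ v.2 = x + (i : ZMod L)}

def IsMupleBridgeSet (L : ℕ) (S : Set (Site L)) (m : ℕ) : Prop :=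
  ∃ x vert, S = bridgeOddSet L x m vert

/-- A family of pairwise disjoint bars attached to `S`. -/
def BarsFamily (L : ℕ) (r : ℕ) (B : Fin r → Set (Site L)) (len : Fin r → ℕ)
    (S : Set (Site L)) : Prop :=
  (∀ i, IsBar L (B i) (len i)) ∧ (∀ i, AttachedTo L (B i) S) ∧
  (∀ i j, i ≠ j → Disjoint (B i) (B j))

/-- The set `C_mb(e,o)`. -/
def Cmb (L : ℕ) : Set (Site L → Bool) :=
  {σ | IsConfig L σ ∧ ∃ C : Set (Site L), ∃ v : Site L,
    IsOddCluster L C ∧ (C ∩ Vo L).Nonempty ∧ MonotoneCluster L C ∧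
    v ∈ Ve L ∧ v ∉ C ∧ (∃ z, IsAntiknob L C z ∧ adjacent L v z) ∧
    oddRegion L σ = C ∪ {v} ∧
    ((∃ S, IsMupleBridgeSet L S (L - 3) ∧ C = S ∪ extBoundary L S) ∨
     (∃ m, 2 ≤ m ∧ m < L - 3 ∧ ∃ S, IsMupleBridgeSet L S m ∧
       ∃ k ≤ L / 2 - 1, ∃ r : ℕ, ∃ B : Fin r → Set (Site L), ∃ len : Fin r → ℕ,
         BarsFamily L r B len S ∧ Finset.univ.sum len = k ∧
         C = (S ∪ ⋃ i, B i) ∪ extBoundary L (S ∪ ⋃ i, B i)) ∨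
     (∃ S, IsMupleBridgeSet L S 1 ∧
       ∃ k ≤ L / 2 - 1, ∃ r : ℕ, ∃ B : Fin r → Set (Site L), ∃ len : Fin r → ℕ,
         BarsFamily L r B len S ∧ Finset.univ.sum len = k ∧
         C = (S ∪ ⋃ i, B i) ∪ extBoundary L (S ∪ ⋃ i, B i) ∧
         ∀ η ∈ Vo L, ¬ rhombusND L η (L / 2 - 1) (L / 2) ⊆ C))}

/-- Distance between two columns (or rows) of the torus. -/
def zdist (L : ℕ) (a b : ZMod L) : ℕ := min (a - b).val (b - a).val

/-- The set `C_ib(e,o)`. -/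
def Cib (L : ℕ) : Set (Site L → Bool) :=
  {σ | IsConfig L σ ∧ ∃ C : Set (Site L), ∃ v : Site L,
    IsOddCluster L C ∧ (C ∩ Vo L).Nonempty ∧ MonotoneCluster L C ∧
    (∀ η ∈ Vo L, ¬ rhombusND L η (L / 2 - 1) (L / 2 - 1) ⊆ C) ∧
    v ∈ Ve L ∧ v ∉ C ∧ (∃ z, IsAntiknob L C z ∧ adjacent L v z) ∧
    oddRegion L σ = C ∪ {v} ∧
    ((∃ x : ZMod L, colCount L C x = L / 2 - 1 ∧
        ∀ x', x' ≠ x → colCount L C x' ≤ L / 2 - 1 - zdist L x' x) ∨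
     (∃ x : ZMod L, colCount L C x = L / 2 - 1 ∧ colCount L C (x + 1) = L / 2 - 1 ∧
        ∀ x', x' ≠ x → x' ≠ x + 1 →
          colCount L C x' ≤ L / 2 - 1 - min (zdist L x' x) (zdist L x' (x + 1))) ∨
     (∃ y : ZMod L, rowCount L C y = L / 2 - 1 ∧
        ∀ y', y' ≠ y → rowCount L C y' ≤ L / 2 - 1 - zdist L y' y) ∨
     (∃ y : ZMod L, rowCount L C y = L / 2 - 1 ∧ rowCount L C (y + 1) = L / 2 - 1 ∧
        ∀ y', y' ≠ y → y' ≠ y + 1 →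
          rowCount L C y' ≤ L / 2 - 1 - min (zdist L y' y) (zdist L y' (y + 1)))) ∧
    (∃ R, IsSurroundingRhombus L C R ∧
      ∀ η ∈ Vo L, ¬ R ⊆ rhombusND L η (L / 2 - 1) (L / 2 - 1))}

/-- Maximal energy along a path. -/
noncomputable def pathMax (L : ℕ) (ω : List (Site L → Bool)) : WithBot ℤ :=
  (ω.map (energy L)).maximum

/-- Optimal paths from `e` to `o`. -/
def IsOptimalPath (L : ℕ) (ω : List (Site L → Bool)) : Prop :=
  IsPathFrom L ω (eCfg L) (oCfg L) ∧
  ∀ ω', IsPathFrom L ω' (eCfg L) (oCfg L) → pathMax L ω ≤ pathMax L ω'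

/-- The saddles `S(ω)` of a path `ω`. -/
def saddleSet (L : ℕ) (ω : List (Site L → Bool)) : Set (Site L → Bool) :=
  {ξ | ξ ∈ ω ∧ (energy L ξ : WithBot ℤ) = pathMax L ω}

/-- A saddle: a maximal-energy configuration of some optimal path. -/
def IsSaddle (L : ℕ) (ξ : Site L → Bool) : Prop :=
  ∃ ω, IsOptimalPath L ω ∧ ξ ∈ saddleSet L ω

/-- Essential saddles. -/
def IsEssentialSaddle (L : ℕ) (ξ : Site L → Bool) : Prop :=
  IsSaddle L ξ ∧
  ((∃ ω, IsOptimalPath L ω ∧ saddleSet L ω = {ξ}) ∨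
   (∃ ω, IsOptimalPath L ω ∧ ξ ∈ saddleSet L ω ∧
     ∀ ω', IsOptimalPath L ω' → ¬ saddleSet L ω' ⊆ saddleSet L ω \ {ξ}))

/-!
A column of the torus is a cycle of length `L`, so a hard-core configuration occupies at most
`L / 2` of its sites, with equality only if the column alternates, i.e. is full on one
sublattice. Since `ΔH(σ) = ∑_c (L / 2 - #(σ ∩ column c))`, the bound `ΔH(σ) < L` forces a full
column. Next to a full column `c`, an empty sublattice site of column `c + 1` has no occupied
neighbour except possibly the one in column `c + 2`: removing that particle and then adding the
site never exceeds `H(σ) + 1` and does not raise the energy. Sweeping column after column reaches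
`e` or `o`.
-/

open Finset Relation

section Cyclic

variable {G : Type*} [AddGroup G] [Fintype G] [DecidableEq G]

-- `y ↦ y + g` injects `{f = true}` into `{f = false}`; it is onto exactly when `f` alternates.
theorem two_mul_card_le_and_eq_iff_alternating {g : G} {f : G → Bool}
    (hf : ∀ y, ¬ (f y = true ∧ f (y + g) = true)) :
    2 * #{y | f y = true} ≤ Fintype.card G ∧
      (2 * #{y | f y = true} = Fintype.card G ↔ ∀ y, f (y + g) = !f y) := by
  set T : Finset G := {y | f y = true}
  set T' := T.map (Equiv.addRight g).toEmbedding
  have hmem' : ∀ y, y + g ∈ T' ↔ f y = true := fun y => by simp [T', T]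
  have hsub : T' ⊆ Tᶜ := fun x hx => by
    obtain ⟨y, rfl⟩ : ∃ y, x = y + g := ⟨x - g, by simp⟩
    have := hf y
    simp_all [T]
  have heq : T' = Tᶜ ↔ ∀ y, f (y + g) = !f y := by
    rw [Finset.ext_iff, ← (Equiv.addRight g).forall_congr_right]
    refine forall_congr' fun y => ?_
    simp only [Equiv.coe_addRight, hmem', mem_compl, T, mem_filter, mem_univ, true_and]
    cases f y <;> cases f (y + g) <;> simp
  have hle := card_le_card hsub
  rw [card_map, card_compl] at hle
  have hT : #T ≤ Fintype.card G := card_le_univ T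
  refine ⟨by omega, ?_⟩
  rw [← heq, ← eq_iff_card_le_of_subset hsub, card_map, card_compl]
  omega

end Cyclic

section ZModCycle

variable {L : ℕ} [NeZero L]

theorem ZMod.forall_of_imp_add_one {P : ZMod L → Prop} (a : ZMod L) (ha : P a)
    (h : ∀ y, P y → P (y + 1)) (y : ZMod L) : P y := by
  have hn : ∀ n : ℕ, P (a + n) := fun n => by
    induction n with
    | zero => simpa using ha
    | succ n ih => simpa [add_assoc] using h _ ih
  simpa using hn (y - a).val

theorem ZMod.exists_and_not_add_one {P : ZMod L → Prop} (hP : ∃ c, P c) (hP' : ¬ ∀ c, P c) :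
    ∃ c, P c ∧ ¬ P (c + 1) := by
  obtain ⟨a, ha⟩ := hP
  by_contra! h
  exact hP' (ZMod.forall_of_imp_add_one a ha h)

theorem ZMod.val_add_mod_two (hL : Even L) (a b : ZMod L) :
    (a + b).val % 2 = (a.val + b.val) % 2 := by
  rw [ZMod.val_add, Nat.mod_mod_of_dvd _ hL.two_dvd]

end ZModCycle

section Lattice

variable {L : ℕ}

theorem adjacent_comm {v w : Site L} : adjacent L v w ↔ adjacent L w v := by
  unfold adjacent
  tauto

theorem adjacent_add_one_fst (v : Site L) : adjacent L v (v.1 + 1, v.2) := by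
  simp [adjacent]

theorem adjacent_add_one_snd (v : Site L) : adjacent L v (v.1, v.2 + 1) := by
  simp [adjacent]

theorem not_adjacent_self (hL : L ≠ 1) (v : Site L) : ¬ adjacent L v v := by
  have : (1 : ZMod L) ≠ 0 := by
    have : Nontrivial (ZMod L) := ZMod.nontrivial_iff.mpr hL
    exact one_ne_zero
  simp [adjacent, this]

def groundCfg (L : ℕ) (b : Bool) : Site L → Bool := fun v => decide (isEvenSite L v) == b

theorem groundCfg_true : groundCfg L true = eCfg L := by
  funext v
  simp [groundCfg, eCfg]

theorem groundCfg_false : groundCfg L false = oCfg L := by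
  funext v
  simp [groundCfg, oCfg]

variable [NeZero L]

theorem isEvenSite_add_one_fst (hL : Even L) (a b : ZMod L) :
    isEvenSite L (a + 1, b) ↔ ¬ isEvenSite L (a, b) := by
  have h1 : (1 : ZMod L).val = 1 := ZMod.val_one'' (by rintro rfl; simp at hL)
  have := ZMod.val_add_mod_two hL (a + b) 1
  rw [h1, show a + b + 1 = a + 1 + b by ring] at this
  simp only [isEvenSite]
  omega

theorem isEvenSite_add_one_snd (hL : Even L) (a b : ZMod L) :
    isEvenSite L (a, b + 1) ↔ ¬ isEvenSite L (a, b) := by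
  simpa only [isEvenSite, add_assoc, add_comm 1 b] using isEvenSite_add_one_fst hL a b

theorem groundCfg_add_one_fst (hL : Even L) (b : Bool) (a y : ZMod L) :
    groundCfg L b (a + 1, y) = !groundCfg L b (a, y) := by
  simp only [groundCfg, isEvenSite_add_one_fst hL, decide_not]
  cases decide (isEvenSite L (a, y)) <;> cases b <;> rfl

theorem groundCfg_add_one_snd (hL : Even L) (b : Bool) (a y : ZMod L) :
    groundCfg L b (a, y + 1) = !groundCfg L b (a, y) := by
  simp only [groundCfg, isEvenSite_add_one_snd hL, decide_not]
  cases decide (isEvenSite L (a, y)) <;> cases b <;> rfl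

theorem groundCfg_of_adjacent (hL : Even L) (b : Bool) {v w : Site L} (h : adjacent L v w) :
    groundCfg L b w = !groundCfg L b v := by
  obtain ⟨v₁, v₂⟩ := v
  obtain ⟨w₁, w₂⟩ := w
  simp only [adjacent] at h
  obtain ⟨rfl, rfl | rfl⟩ | ⟨rfl, rfl | rfl⟩ := h <;>
    simp [groundCfg_add_one_fst hL, groundCfg_add_one_snd hL]

theorem isConfig_groundCfg (hL : Even L) (b : Bool) : IsConfig L (groundCfg L b) :=
  fun _ _ h ⟨hv, hw⟩ => by simp [groundCfg_of_adjacent hL b h, hv] at hw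

end Lattice

section Config

variable {L : ℕ} {σ : Site L → Bool}

theorem IsConfig.eq_false_of_adjacent (hσ : IsConfig L σ) {v w : Site L} (h : adjacent L v w)
    (hw : σ w = true) : σ v = false := by
  simpa using fun hv => hσ v w h ⟨hv, hw⟩

theorem IsConfig.update_false (hσ : IsConfig L σ) (z : Site L) :
    IsConfig L (Function.update σ z false) := by
  intro v w h
  by_cases hv : v = z
  · simp [hv]
  by_cases hw : w = z
  · simp [hw]
  simpa [hv, hw] using hσ v w h

theorem IsConfig.update_true (hσ : IsConfig L σ) (hL : L ≠ 1) {z : Site L}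
    (hz : ∀ w, adjacent L z w → σ w = false) : IsConfig L (Function.update σ z true) := by
  intro v w h
  by_cases hv : v = z
  · subst hv
    have hw : w ≠ v := by rintro rfl; exact not_adjacent_self hL _ h
    simp [hw, hz w h]
  by_cases hw : w = z
  · subst hw
    simp [hv, hz v (adjacent_comm.mp h)]
  simpa [hv, hw] using hσ v w h

theorem stepRel_update (σ : Site L → Bool) (z : Site L) (a : Bool) :
    stepRel L σ (Function.update σ z a) := by
  have hz : ∀ w, σ w ≠ Function.update σ z a w → w = z := fun w hw => by
    by_contra hwz
    simp [hwz] at hw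
  exact fun x hx y hy => (hz x hx).trans (hz y hy).symm

def StepBelow (L : ℕ) (E : ℤ) (ξ ξ' : Site L → Bool) : Prop :=
  stepRel L ξ ξ' ∧ IsConfig L ξ' ∧ energy L ξ' ≤ E

theorem StepBelow.mono {E E' : ℤ} (hE : E ≤ E') : StepBelow L E ≤ StepBelow L E' :=
  fun _ _ ⟨hstep, hcfg, hlow⟩ => ⟨hstep, hcfg, hlow.trans hE⟩

theorem exists_path_of_reflTransGen {E : ℤ} {τ : Site L → Bool}
    (h : ReflTransGen (StepBelow L E) σ τ) (hσ : IsConfig L σ) (hσE : energy L σ ≤ E) :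
    ∃ ω, IsPathFrom L ω σ τ ∧ ∀ ξ ∈ ω, energy L ξ ≤ E := by
  induction h using ReflTransGen.head_induction_on with
  | refl =>
    exact ⟨[τ], ⟨⟨by simpa using hσ, List.isChain_singleton _⟩, rfl, rfl⟩, by simpa using hσE⟩
  | @head ξ ξ' hstep _ ih =>
    obtain ⟨ω, ⟨⟨hcfg, hchain⟩, hhead, hlast⟩, hlow⟩ := ih hstep.2.1 hstep.2.2
    obtain ⟨t, rfl⟩ : ∃ t, ω = ξ' :: t := by
      cases ω <;> simp_all
    refine ⟨ξ :: ξ' :: t, ⟨⟨?_, ?_⟩, rfl, ?_⟩, ?_⟩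
    · simpa [hσ] using hcfg
    · exact List.isChain_cons_cons.mpr ⟨hstep.1, hchain⟩
    · rwa [List.getLast?_cons_cons]
    · simpa [hσE] using hlow

variable [NeZero L]

theorem energy_update_true {z : Site L} (hz : σ z = false) :
    energy L (Function.update σ z true) = energy L σ - 1 := by
  have hset : {v | Function.update σ z true v = true} = insert z {v | σ v = true} := by
    ext v
    by_cases hv : v = z <;> simp [hv]
  rw [energy, energy, hset, Set.ncard_insert_of_notMem (by simp [hz])]
  push_cast
  ring

theorem energy_update_false_le (σ : Site L → Bool) (z : Site L) :
    energy L (Function.update σ z false) ≤ energy L σ + 1 := by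
  cases hz : σ z
  · rw [← hz, Function.update_eq_self]
    omega
  · have h := energy_update_true (σ := Function.update σ z false) (z := z) (by simp)
    rw [Function.update_idem, ← hz, Function.update_eq_self] at h
    omega

end Config

section Columns

variable {L : ℕ} [NeZero L] {σ : Site L → Bool}

def colOcc (L : ℕ) [NeZero L] (σ : Site L → Bool) (c : ZMod L) : ℕ :=
  #{y | σ (c, y) = true}

theorem energy_eq_neg_sum_colOcc (σ : Site L → Bool) :
    energy L σ = -∑ c, (colOcc L σ c : ℤ) := by
  have h : {v | σ v = true} = ((univ.filter fun v => σ v = true : Finset (Site L)) : Set _) := by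
    ext; simp
  rw [energy, h, Set.ncard_coe_finset, card_filter, Fintype.sum_prod_type]
  simp only [colOcc, card_filter]
  push_cast
  rfl

theorem IsConfig.two_mul_colOcc_le_and_eq_iff (hσ : IsConfig L σ) (c : ZMod L) :
    2 * colOcc L σ c ≤ L ∧ (2 * colOcc L σ c = L ↔ ∀ y, σ (c, y + 1) = !σ (c, y)) := by
  simpa [colOcc] using two_mul_card_le_and_eq_iff_alternating (f := fun y => σ (c, y))
    (g := 1) fun y => hσ _ _ (adjacent_add_one_snd (c, y))

theorem two_mul_colOcc_eCfg (hL : Even L) (c : ZMod L) : 2 * colOcc L (eCfg L) c = L := by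
  have he : IsConfig L (eCfg L) := groundCfg_true (L := L) ▸ isConfig_groundCfg hL true
  refine (he.two_mul_colOcc_le_and_eq_iff c).2.2 fun y => ?_
  simpa [groundCfg_true] using groundCfg_add_one_snd hL true c y

def IsColFull (L : ℕ) (b : Bool) (σ : Site L → Bool) (c : ZMod L) : Prop :=
  ∀ y, groundCfg L b (c, y) = true → σ (c, y) = true

-- An alternating column is `groundCfg L b` there, for the `b` that matches it at `y = 0`.
theorem IsConfig.exists_isColFull_of_two_mul_colOcc_eq (hL : Even L) (hσ : IsConfig L σ)
    {c : ZMod L} (h : 2 * colOcc L σ c = L) : ∃ b, IsColFull L b σ c := by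
  have halt := (hσ.two_mul_colOcc_le_and_eq_iff c).2.1 h
  set b := σ (c, 0) == groundCfg L true (c, 0)
  have hcol : ∀ y, σ (c, y) = groundCfg L b (c, y) := by
    refine ZMod.forall_of_imp_add_one 0 ?_ fun y hy => ?_
    · simp only [b, groundCfg]
      cases σ (c, 0) <;> cases decide (isEvenSite L (c, 0)) <;> rfl
    · rw [halt, groundCfg_add_one_snd hL, hy]
  exact ⟨b, fun y hy => (hcol y).trans hy⟩

theorem IsConfig.exists_isColFull (hL : Even L) (hσ : IsConfig L σ)
    (hΔ : energy L σ - energy L (eCfg L) < (L : ℤ)) : ∃ b c, IsColFull L b σ c := by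
  by_contra! hno
  have hdeficit : ∀ c, (1 : ℤ) ≤ colOcc L (eCfg L) c - colOcc L σ c := fun c => by
    have he := two_mul_colOcc_eCfg hL c
    have hle := (hσ.two_mul_colOcc_le_and_eq_iff c).1
    have hne : 2 * colOcc L σ c ≠ L := fun h' => by
      obtain ⟨b, hb⟩ := hσ.exists_isColFull_of_two_mul_colOcc_eq hL h'
      exact hno b c hb
    obtain ⟨k, rfl⟩ := hL
    omega
  have hsum := sum_le_sum fun c (_ : c ∈ univ) => hdeficit c
  rw [sum_sub_distrib, sum_const, card_univ, ZMod.card] at hsum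
  rw [energy_eq_neg_sum_colOcc, energy_eq_neg_sum_colOcc] at hΔ
  simp only [nsmul_eq_mul, mul_one] at hsum
  linarith

end Columns

section Filling

variable {L : ℕ} [NeZero L] {b : Bool} {σ : Site L → Bool} {c : ZMod L}

theorem IsColFull.eq_false_of_groundCfg_eq_false (hL : Even L) (hσ : IsConfig L σ)
    (hc : IsColFull L b σ c) {w : Site L} (hw : w.1 = c ∨ w.1 = c + 1)
    (hwg : groundCfg L b w = false) : σ w = false := by
  obtain ⟨w₁, y⟩ := w
  obtain rfl | rfl := hw
  · have hup : σ (w₁, y + 1) = true := hc _ (by simp [groundCfg_add_one_snd hL, hwg])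
    exact hσ.eq_false_of_adjacent (adjacent_add_one_snd _) hup
  · have hleft : σ (c, y) = true := hc _ (by simpa [groundCfg_add_one_fst hL] using hwg)
    exact hσ.eq_false_of_adjacent (adjacent_comm.mp (adjacent_add_one_fst _)) hleft

theorem IsColFull.eq_false_of_adjacent (hL : Even L) (hσ : IsConfig L σ)
    (hc : IsColFull L b σ c) {y : ZMod L} (hz : groundCfg L b (c + 1, y) = true) {w : Site L}
    (hw : adjacent L (c + 1, y) w) (hwu : w ≠ (c + 1 + 1, y)) : σ w = false := by
  have hwg : groundCfg L b w = false := by simp [groundCfg_of_adjacent hL b hw, hz]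
  refine hc.eq_false_of_groundCfg_eq_false hL hσ ?_ hwg
  obtain ⟨w₁, w₂⟩ := w
  simp only [adjacent] at hw
  obtain ⟨rfl, h | rfl⟩ | ⟨h, -⟩ := hw
  · exact Or.inl (add_right_cancel h).symm
  · exact absurd rfl hwu
  · exact Or.inr h.symm

noncomputable def defect (L : ℕ) (b : Bool) (σ : Site L → Bool) : ℕ :=
  {v | groundCfg L b v = true ∧ σ v = false}.ncard

theorem defect_update_update_lt {z u : Site L} (hz : groundCfg L b z = true)
    (hzσ : σ z = false) (hu : groundCfg L b u = false) :
    defect L b (Function.update (Function.update σ u false) z true) < defect L b σ := by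
  have hsub : {v | groundCfg L b v = true ∧
      Function.update (Function.update σ u false) z true v = false} ⊆
      {v | groundCfg L b v = true ∧ σ v = false} := fun v ⟨hv, hvσ⟩ => by
    have hvz : v ≠ z := by rintro rfl; simp at hvσ
    have hvu : v ≠ u := by rintro rfl; simp [hu] at hv
    exact ⟨hv, by simpa [hvz, hvu] using hvσ⟩
  exact Set.ncard_lt_ncard ((Set.ssubset_iff_of_subset hsub).mpr ⟨z, ⟨hz, hzσ⟩, by simp⟩)

-- Empty `(c + 2, y)`, the only possible blocker (energy `+ 1`), then occupy `(c + 1, y)` (`- 1`).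
theorem IsColFull.exists_fill (hL : Even L) (hL2 : 2 < L) (hσ : IsConfig L σ)
    (hc : IsColFull L b σ c) {y : ZMod L} (hz : groundCfg L b (c + 1, y) = true)
    (hzσ : σ (c + 1, y) = false) :
    ∃ σ', ReflTransGen (StepBelow L (energy L σ + 1)) σ σ' ∧ IsConfig L σ' ∧
      energy L σ' ≤ energy L σ ∧ IsColFull L b σ' c ∧ defect L b σ' < defect L b σ := by
  set z : Site L := (c + 1, y)
  set u : Site L := (c + 1 + 1, y)
  set σ₁ := Function.update σ u false
  set σ₂ := Function.update σ₁ z true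
  have h1 : (1 : ZMod L) ≠ 0 := by
    have : Nontrivial (ZMod L) := ZMod.nontrivial_iff.mpr (by omega)
    exact one_ne_zero
  have h2 : (2 : ZMod L) ≠ 0 := by
    simpa using (ZMod.natCast_eq_zero_iff 2 L).not.mpr (Nat.not_dvd_of_pos_of_lt two_pos hL2)
  have hzu : z ≠ u := by simp [z, u, Prod.ext_iff, h1]
  have hcol : ∀ y', (c, y') ≠ z ∧ (c, y') ≠ u := fun y' => by
    simp only [z, u, ne_eq, Prod.mk.injEq, not_and]
    exact ⟨fun h => absurd (left_eq_add.mp h) h1,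
      fun h => absurd (left_eq_add.mp (h.trans (by ring))) h2⟩
  have hσ₁ : IsConfig L σ₁ := hσ.update_false u
  have hσ₁z : σ₁ z = false := by simp [σ₁, hzu, hzσ]
  have hσ₂ : IsConfig L σ₂ := hσ₁.update_true (by omega) fun w hw => by
    by_cases hwu : w = u
    · simp [σ₁, hwu]
    · simpa [σ₁, hwu] using hc.eq_false_of_adjacent hL hσ hz hw hwu
  have hE₁ : energy L σ₁ ≤ energy L σ + 1 := energy_update_false_le σ u
  have hE₂ : energy L σ₂ = energy L σ₁ - 1 := energy_update_true hσ₁z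
  refine ⟨σ₂, ?_, hσ₂, by omega, fun y' hy' => ?_, ?_⟩
  · exact .tail (.single ⟨stepRel_update σ u false, hσ₁, hE₁⟩)
      ⟨stepRel_update σ₁ z true, hσ₂, by omega⟩
  · simpa [σ₂, σ₁, (hcol y').1, (hcol y').2] using hc y' hy'
  · have hu : groundCfg L b u = !groundCfg L b z := groundCfg_add_one_fst hL b (c + 1) y
    exact defect_update_update_lt hz hzσ (by rw [hu, hz]; rfl)

theorem IsConfig.eq_groundCfg_of_forall_isColFull (hL : Even L) (hσ : IsConfig L σ)
    (h : ∀ c, IsColFull L b σ c) : σ = groundCfg L b := by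
  funext v
  cases hv : groundCfg L b v
  · exact (h v.1).eq_false_of_groundCfg_eq_false hL hσ (Or.inl rfl) hv
  · exact h v.1 v.2 hv

theorem IsConfig.reflTransGen_groundCfg (hL : Even L) (hL2 : 2 < L) (hσ : IsConfig L σ)
    (hfull : ∃ c, IsColFull L b σ c) :
    ReflTransGen (StepBelow L (energy L σ + 1)) σ (groundCfg L b) := by
  induction hd : defect L b σ using Nat.strong_induction_on generalizing σ with
  | _ n ih =>
  by_cases hall : ∀ c, IsColFull L b σ c
  · rw [← hσ.eq_groundCfg_of_forall_isColFull hL hall]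
  obtain ⟨c, hc, hc1⟩ := ZMod.exists_and_not_add_one hfull hall
  simp only [IsColFull, not_forall, Bool.not_eq_true] at hc1
  obtain ⟨y, hz, hzσ⟩ := hc1
  obtain ⟨σ', hreach, hσ', hE, hc', hlt⟩ := hc.exists_fill hL hL2 hσ hz hzσ
  exact hreach.trans <|
    ReflTransGen.mono (StepBelow.mono (by omega)) _ _ (ih _ (hd ▸ hlt) hσ' ⟨c, hc'⟩ rfl)

end Filling

/-- **Configurations with `ΔH < L` belong to one of the initial cycles.**
If `ΔH(σ) < L` then there is a path from `σ` to `e` or to `o` with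
`Φ_ω ≤ H(σ) + 1`; in particular `Φ(σ,e) < H(e)+L+1` or `Φ(σ,o) < H(e)+L+1`,
i.e. `σ ∈ C_e` or `σ ∈ C_o`. -/
theorem low_energy_in_initial_cycle (L : ℕ) (hL : Even L) (hL6 : 6 ≤ L)
    (σ : Site L → Bool) (hσ : IsConfig L σ)
    (hΔ : energy L σ - energy L (eCfg L) < (L : ℤ)) :
    (∃ ω, (IsPathFrom L ω σ (eCfg L) ∨ IsPathFrom L ω σ (oCfg L)) ∧
       ∀ ξ ∈ ω, energy L ξ ≤ energy L σ + 1) ∧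
    ((∃ ω, IsPathFrom L ω σ (eCfg L) ∧
        ∀ ξ ∈ ω, energy L ξ < energy L (eCfg L) + (L : ℤ) + 1) ∨
     (∃ ω, IsPathFrom L ω σ (oCfg L) ∧
        ∀ ξ ∈ ω, energy L ξ < energy L (eCfg L) + (L : ℤ) + 1)) := by
  have : NeZero L := ⟨by omega⟩
  obtain ⟨b, hfull⟩ := hσ.exists_isColFull hL hΔ
  obtain ⟨ω, hω, hωE⟩ := exists_path_of_reflTransGen
    (hσ.reflTransGen_groundCfg hL (by omega) hfull) hσ (by omega)
  have hlow : ∀ ξ ∈ ω, energy L ξ < energy L (eCfg L) + L + 1 := fun ξ hξ => by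
    linarith [hωE ξ hξ]
  cases b
  · rw [groundCfg_false] at hω
    exact ⟨⟨ω, .inr hω, hωE⟩, .inr ⟨ω, hω, hlow⟩⟩
  · rw [groundCfg_true] at hω
    exact ⟨⟨ω, .inl hω, hωE⟩, .inl ⟨ω, hω, hlow⟩⟩

end HardCoreGrid
end

section
/- Fix an even integer L ≥ 6 and let Λ be the L×L toric grid graph. For every configuration η ∈ C_ir(e,o) there exists a non-backtracking path ω from e to η, with consecutive configurations differing in exactly one site, such that H(ξ) < H(η) for every configuration ξ in ω other than η (so the maximum of the energy along ω is attained only at η, and Φ_ω = H(η) = H(e)+L+1 = Φ(e,o), i.e. ω is an initial segment of an optimal path). -/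
namespace HardCoreGrid

/-! A configuration is determined by its odd region, and any set `A` in which every odd site
has its four neighbours is the odd region of a hard-core configuration, of energy
`H(e) + |A ∩ V_e| - |A ∩ V_o|`. A path from `e` to `η` is therefore obtained by growing the odd
region `R ∪ D` of `η` one site at a time while keeping that closure property; every step
increases `|A|` by one, hence `m` by one, so such a path is non-backtracking.

The rhombus `R = R_{ℓ,ℓ}(η₀)`, `ℓ = L/2 - 1`, consists of `(ℓ+1)²` even and `ℓ²` odd sites on two
diagonal grids. Grow it one diagonal column at a time: first the `ℓ + 1` even sites of column
`0`; then, for each later column, its bottom even site, followed alternately by the next even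
site and the odd site of the previous column that it completes. Along the way the excess
`|A ∩ V_e| - |A ∩ V_o|` never exceeds `2ℓ + 2 = L`, and it equals `L - 1` on `R`. Adding the two
even sites of `D` brings it to `L` and then to `L + 1`, so only the last configuration, `η`,
reaches `H(e) + L + 1`. -/

lemma adjacent_symm {L : ℕ} {v w : Site L} (h : adjacent L v w) : adjacent L w v := by
  unfold adjacent at *; tauto

section Parity

variable {L : ℕ} [NeZero L]

lemma isEvenSite_iff_castHom (h2 : 2 ∣ L) (v : Site L) :
    isEvenSite L v ↔ ZMod.castHom h2 (ZMod 2) (v.1 + v.2) = 0 := by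
  rw [isEvenSite, ZMod.castHom_apply, ZMod.cast_eq_val, ZMod.natCast_eq_zero_iff,
    Nat.dvd_iff_mod_eq_zero]

lemma isEvenSite_iff_not_of_sum_eq_add_one (h2 : 2 ∣ L) {v w : Site L}
    (hvw : w.1 + w.2 = v.1 + v.2 + 1) : isEvenSite L w ↔ ¬ isEvenSite L v := by
  rw [isEvenSite_iff_castHom h2, isEvenSite_iff_castHom h2, hvw, map_add, map_one]
  generalize ZMod.castHom h2 (ZMod 2) (v.1 + v.2) = a
  revert a; decide

lemma isEvenSite_iff_of_sum_eq_add_two_mul (h2 : 2 ∣ L) {v w : Site L} {s : ZMod L}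
    (hvw : w.1 + w.2 = v.1 + v.2 + 2 * s) : isEvenSite L w ↔ isEvenSite L v := by
  rw [isEvenSite_iff_castHom h2, isEvenSite_iff_castHom h2, hvw, map_add, map_mul, map_ofNat]
  generalize ZMod.castHom h2 (ZMod 2) (v.1 + v.2) = a
  generalize ZMod.castHom h2 (ZMod 2) s = b
  revert a b; decide

lemma isEvenSite_iff_not_of_adjacent (h2 : 2 ∣ L) {v w : Site L} (hvw : adjacent L v w) :
    isEvenSite L v ↔ ¬ isEvenSite L w := by
  rcases hvw with ⟨hy, hx | hx⟩ | ⟨hx, hy | hy⟩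
  · exact isEvenSite_iff_not_of_sum_eq_add_one h2 (by rw [hx, hy]; ring)
  · rw [isEvenSite_iff_not_of_sum_eq_add_one h2 (v := v) (w := w) (by rw [hx, hy]; ring)]
    tauto
  · exact isEvenSite_iff_not_of_sum_eq_add_one h2 (by rw [hx, hy]; ring)
  · rw [isEvenSite_iff_not_of_sum_eq_add_one h2 (v := v) (w := w) (by rw [hx, hy]; ring)]
    tauto

end Parity

section OddRegion

variable {L : ℕ}

open Classical in
noncomputable def regionCfg (A : Set (Site L)) : Site L → Bool :=
  fun w => decide (isEvenSite L w ↔ w ∉ A)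

lemma oddRegion_regionCfg (A : Set (Site L)) : oddRegion L (regionCfg A) = A := by
  ext w
  by_cases hw : isEvenSite L w <;> simp [oddRegion, regionCfg, Ve, Vo, hw]

lemma regionCfg_oddRegion (σ : Site L → Bool) : regionCfg (oddRegion L σ) = σ := by
  funext w
  by_cases hw : isEvenSite L w <;> cases hσ : σ w <;>
    simp [oddRegion, regionCfg, Ve, Vo, hw, hσ]

lemma regionCfg_empty : regionCfg (∅ : Set (Site L)) = eCfg L := by
  funext w; simp [regionCfg, eCfg]

def IsOddClosed (A : Set (Site L)) : Prop :=
  ∀ v ∈ A, v ∈ Vo L → ∀ w, adjacent L v w → w ∈ A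

lemma isConfig_regionCfg [NeZero L] (h2 : 2 ∣ L) {A : Set (Site L)} (hA : IsOddClosed A) :
    IsConfig L (regionCfg A) := by
  intro v w hvw ⟨hv, hw⟩
  have hpar := isEvenSite_iff_not_of_adjacent h2 hvw
  simp only [regionCfg, decide_eq_true_eq] at hv hw
  by_cases hve : isEvenSite L v
  · have hwo : ¬ isEvenSite L w := hpar.1 hve
    exact hv.1 hve (hA w (not_not.1 (hw.2.mt hwo)) hwo v (adjacent_symm hvw))
  · exact hw.1 (not_not.1 (hpar.2.mt hve)) (hA v (not_not.1 (hv.2.mt hve)) hve w hvw)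

noncomputable def excess (A : Set (Site L)) : ℤ := (A ∩ Ve L).ncard - (A ∩ Vo L).ncard

lemma occupied_regionCfg (A : Set (Site L)) :
    {w | regionCfg A w = true} = (Ve L \ A) ∪ (A ∩ Vo L) := by
  ext w
  by_cases hw : isEvenSite L w <;> by_cases hwA : w ∈ A <;> simp [regionCfg, Ve, Vo, hw, hwA]

variable [NeZero L]

lemma energy_regionCfg (A : Set (Site L)) :
    energy L (regionCfg A) = energy L (eCfg L) + excess A := by
  have he : {w | eCfg L w = true} = Ve L := by ext w; simp [eCfg, Ve]
  have hsplit := Set.ncard_inter_add_ncard_sdiff_eq_ncard (Ve L) A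
  have hdisj : Disjoint (Ve L \ A) (A ∩ Vo L) :=
    Set.disjoint_left.2 fun w hw hw' => hw'.2 hw.1
  rw [Set.inter_comm] at hsplit
  rw [energy, energy, occupied_regionCfg, he, Set.ncard_union_eq hdisj, excess]
  omega

lemma mval_regionCfg (A : Set (Site L)) : mval L (regionCfg A) = A.ncard - (Ve L).ncard := by
  have hodd : {w | w ∈ Vo L ∧ regionCfg A w = true} = A ∩ Vo L := by
    ext w; by_cases hw : isEvenSite L w <;> simp [regionCfg, Vo, hw, and_comm]
  have heven : {w | w ∈ Ve L ∧ regionCfg A w = true} = Ve L \ A := by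
    ext w; by_cases hw : isEvenSite L w <;> simp [regionCfg, Ve, hw]
  have hVe := Set.ncard_inter_add_ncard_sdiff_eq_ncard (Ve L) A
  have hA := Set.ncard_inter_add_ncard_sdiff_eq_ncard A (Ve L)
  have hdiff : A \ Ve L = A ∩ Vo L := rfl
  rw [Set.inter_comm] at hVe
  rw [mval, nOddOcc, nEvenOcc, hodd, heven, ← hdiff]
  omega

lemma excess_insert_of_isEvenSite {A : Set (Site L)} {x : Site L} (hx : isEvenSite L x)
    (hxA : x ∉ A) : excess (insert x A) = excess A + 1 := by
  have hVe : insert x A ∩ Ve L = insert x (A ∩ Ve L) := Set.insert_inter_of_mem hx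
  have hVo : insert x A ∩ Vo L = A ∩ Vo L := Set.insert_inter_of_notMem fun h => h hx
  rw [excess, excess, hVe, hVo, Set.ncard_insert_of_notMem fun h => hxA h.1]
  push_cast; ring

end OddRegion

section Growth

variable {L : ℕ}

def GrowStep (A B : Set (Site L)) : Prop :=
  ∃ x ∉ A, B = insert x A ∧ (x ∈ Vo L → ∀ w, adjacent L x w → w ∈ A)

namespace GrowStep

variable {A B : Set (Site L)}

lemma isOddClosed (h : GrowStep A B) (hA : IsOddClosed A) : IsOddClosed B := by
  obtain ⟨x, -, rfl, hx⟩ := h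
  rintro v (rfl | hvA) hv w hvw
  · exact Set.mem_insert_of_mem _ (hx hv w hvw)
  · exact Set.mem_insert_of_mem _ (hA v hvA hv w hvw)

lemma stepRel1 (h : GrowStep A B) : stepRel1 L (regionCfg A) (regionCfg B) := by
  obtain ⟨x, hxA, rfl, -⟩ := h
  refine ⟨x, by simp [regionCfg, hxA], fun w hw => ?_⟩
  by_contra hwx
  simp [regionCfg, hwx] at hw

lemma mval_lt [NeZero L] (h : GrowStep A B) : mval L (regionCfg A) < mval L (regionCfg B) := by
  obtain ⟨x, hxA, rfl, -⟩ := h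
  rw [mval_regionCfg, mval_regionCfg, Set.ncard_insert_of_notMem hxA]
  omega

end GrowStep

def GrowsWithin (c : ℤ) : Set (Site L) → Set (Site L) → Prop :=
  Relation.ReflTransGen fun S T => GrowStep S T ∧ excess T ≤ c

theorem exists_path_of_growsWithin [NeZero L] (h2 : 2 ∣ L) {c : ℤ} (hc : 0 ≤ c)
    {A B : Set (Site L)} (hA : GrowsWithin c ∅ A) (hAB : GrowStep A B) :
    ∃ ω : List (Site L → Bool),
      (∀ ξ ∈ ω, IsConfig L ξ) ∧ ω.IsChain (stepRel1 L) ∧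
      ω.head? = some (eCfg L) ∧ ω.getLast? = some (regionCfg B) ∧
      NonBacktracking L ω ∧
      ∀ ξ ∈ ω, ξ ≠ regionCfg B → energy L ξ ≤ energy L (eCfg L) + c := by
  obtain ⟨l, hl, hlA⟩ := List.exists_isChain_cons_of_relationReflTransGen hA
  have hinv : ∀ S ∈ ∅ :: l, IsOddClosed S ∧ excess S ≤ c :=
    hl.induction _ _ (fun S T hST hS => ⟨hST.1.isOddClosed hS.1, hST.2⟩)
      (fun _ => ⟨fun _ h => h.elim, by simp [excess, hc]⟩)
  have hB : IsOddClosed B := hAB.isOddClosed (hinv A (hlA ▸ List.getLast_mem _)).1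
  have hsteps : ((∅ :: l) ++ [B]).IsChain GrowStep :=
    List.isChain_append.2 ⟨hl.imp fun _ _ h => h.1, .singleton _, fun S hS T hT => by
      rw [List.getLast?_eq_some_getLast (List.cons_ne_nil _ _), hlA] at hS
      simp_all⟩
  refine ⟨((∅ :: l) ++ [B]).map regionCfg, ?_,
    (List.isChain_map _).2 (hsteps.imp fun _ _ h => h.stepRel1), by simp [regionCfg_empty],
    by simp only [List.map_append, List.map_cons, List.map_nil, List.getLast?_concat], ?_, ?_⟩
  · simp only [List.mem_map, List.mem_append, List.mem_singleton]
    rintro _ ⟨S, hS | rfl, rfl⟩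
    exacts [isConfig_regionCfg h2 (hinv S hS).1, isConfig_regionCfg h2 hB]
  · have hlt := List.isChain_iff_pairwise.1
      ((List.isChain_map _).2 (hsteps.imp fun _ _ h => h.mval_lt))
    exact List.pairwise_map.2 ((List.pairwise_map.1 hlt).imp ne_of_lt)
  · simp only [List.mem_map, List.mem_append, List.mem_singleton]
    rintro _ ⟨S, hS | rfl, rfl⟩ hne
    · rw [energy_regionCfg]; linarith [(hinv S hS).2]
    · exact absurd rfl hne

end Growth

section Rhombus

variable {L : ℕ}

def rhombusOddSite (η₀ : Site L) (x : ℕ × ℕ) : Site L :=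
  (η₀.1 + x.1 + x.2, η₀.2 + x.1 - x.2)

def rhombusEvenSite (η₀ : Site L) : ℕ × ℕ → Site L :=
  rhombusOddSite (η₀.1 - 1, η₀.2)

def rhombusRegion (η₀ : Site L) (P Q : Finset (ℕ × ℕ)) : Set (Site L) :=
  rhombusEvenSite η₀ '' P ∪ rhombusOddSite η₀ '' Q

def box (n : ℕ) : Finset (ℕ × ℕ) := Finset.range n ×ˢ Finset.range n

lemma box_mono {m n : ℕ} (h : m ≤ n) : box m ⊆ box n :=
  Finset.product_subset_product (Finset.range_mono h) (Finset.range_mono h)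

lemma Sset_eq_image (η₀ : Site L) (ℓ₁ ℓ₂ : ℕ) :
    Sset L η₀ ℓ₁ ℓ₂ = rhombusOddSite η₀ '' ↑(Finset.range ℓ₁ ×ˢ Finset.range ℓ₂) := by
  ext v
  simp only [Sset, rhombusOddSite, Set.mem_ofPred_eq, Set.mem_image, Finset.coe_product,
    Finset.coe_range, Set.mem_prod, Set.mem_Iio, Prod.exists]
  constructor
  · rintro ⟨k, hk, j, hj, rfl⟩; exact ⟨k, j, ⟨hk, hj⟩, rfl⟩
  · rintro ⟨k, j, ⟨hk, hj⟩, rfl⟩; exact ⟨k, hk, j, hj, rfl⟩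

lemma adjacent_rhombusOddSite_iff (η₀ : Site L) (x : ℕ × ℕ) (w : Site L) :
    adjacent L (rhombusOddSite η₀ x) w ↔
      ∃ a ≤ 1, ∃ b ≤ 1, w = rhombusEvenSite η₀ (x.1 + a, x.2 + b) := by
  simp only [adjacent, rhombusEvenSite, rhombusOddSite, Prod.ext_iff]
  constructor
  · rintro (⟨hy, hx | hx⟩ | ⟨hx, hy | hy⟩)
    · exact ⟨0, zero_le_one, 0, zero_le_one, by push_cast; linear_combination -hx,
        by push_cast; linear_combination -hy⟩
    · exact ⟨1, le_rfl, 1, le_rfl, by push_cast; linear_combination hx,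
        by push_cast; linear_combination -hy⟩
    · exact ⟨0, zero_le_one, 1, le_rfl, by push_cast; linear_combination -hx,
        by push_cast; linear_combination -hy⟩
    · exact ⟨1, le_rfl, 0, zero_le_one, by push_cast; linear_combination -hx,
        by push_cast; linear_combination hy⟩
  · rintro ⟨a, ha, b, hb, hx, hy⟩
    rw [hx, hy]
    interval_cases a <;> interval_cases b <;> push_cast
    · exact Or.inl ⟨by ring, Or.inl (by ring)⟩
    · exact Or.inr ⟨by ring, Or.inl (by ring)⟩
    · exact Or.inr ⟨by ring, Or.inr (by ring)⟩
    · exact Or.inl ⟨by ring, Or.inr (by ring)⟩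

lemma rhombusOddSite_injOn (η₀ : Site L) {n : ℕ} (hn : 2 * n ≤ L) :
    Set.InjOn (rhombusOddSite η₀) ↑(box n) := by
  have cast_inj : ∀ a b : ℕ, a < L → b < L → (a : ZMod L) = b → a = b := fun a b ha hb h => by
    rwa [ZMod.natCast_eq_natCast_iff', Nat.mod_eq_of_lt ha, Nat.mod_eq_of_lt hb] at h
  rintro ⟨k, j⟩ hx ⟨k', j'⟩ hy h
  simp only [box, Finset.coe_product, Finset.coe_range, Set.mem_prod, Set.mem_Iio] at hx hy
  simp only [rhombusOddSite, Prod.ext_iff] at h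
  have hsum := cast_inj (k + j) (k' + j') (by omega) (by omega)
    (by push_cast; linear_combination h.1)
  have hdiff := cast_inj (k + j') (k' + j) (by omega) (by omega)
    (by push_cast; linear_combination h.2)
  ext <;> simp only <;> omega

lemma rhombusEvenSite_injOn (η₀ : Site L) {n : ℕ} (hn : 2 * n ≤ L) :
    Set.InjOn (rhombusEvenSite η₀) ↑(box n) :=
  rhombusOddSite_injOn _ hn

variable [NeZero L] {η₀ : Site L}

lemma isEvenSite_rhombusOddSite (h2 : 2 ∣ L) (x : ℕ × ℕ) :
    isEvenSite L (rhombusOddSite η₀ x) ↔ isEvenSite L η₀ :=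
  isEvenSite_iff_of_sum_eq_add_two_mul h2 (s := x.1) (by simp only [rhombusOddSite]; ring)

lemma isEvenSite_rhombusEvenSite (h2 : 2 ∣ L) (x : ℕ × ℕ) :
    isEvenSite L (rhombusEvenSite η₀ x) ↔ ¬ isEvenSite L η₀ := by
  have hbase := isEvenSite_iff_not_of_sum_eq_add_one h2 (v := (η₀.1 - 1, η₀.2)) (w := η₀)
    (by ring)
  rw [rhombusEvenSite, isEvenSite_rhombusOddSite h2, hbase, not_not]

lemma rhombusEvenSite_ne_rhombusOddSite (h2 : 2 ∣ L) (x y : ℕ × ℕ) :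
    rhombusEvenSite η₀ x ≠ rhombusOddSite η₀ y := fun h => by
  have := isEvenSite_rhombusOddSite h2 (η₀ := η₀) y
  rw [← h, isEvenSite_rhombusEvenSite h2] at this
  tauto

lemma rhombusRegion_inter_Ve (h2 : 2 ∣ L) (hη₀ : η₀ ∈ Vo L) (P Q : Finset (ℕ × ℕ)) :
    rhombusRegion η₀ P Q ∩ Ve L = rhombusEvenSite η₀ '' P := by
  ext w
  simp only [rhombusRegion, Set.mem_inter_iff, Set.mem_union, Set.mem_image, Ve,
    Set.mem_ofPred_eq]
  constructor
  · rintro ⟨h | ⟨x, -, rfl⟩, hw⟩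
    exacts [h, absurd ((isEvenSite_rhombusOddSite h2 x).1 hw) hη₀]
  · rintro ⟨x, hx, rfl⟩
    exact ⟨Or.inl ⟨x, hx, rfl⟩, (isEvenSite_rhombusEvenSite h2 x).2 hη₀⟩

lemma rhombusRegion_inter_Vo (h2 : 2 ∣ L) (hη₀ : η₀ ∈ Vo L) (P Q : Finset (ℕ × ℕ)) :
    rhombusRegion η₀ P Q ∩ Vo L = rhombusOddSite η₀ '' Q := by
  ext w
  simp only [rhombusRegion, Set.mem_inter_iff, Set.mem_union, Set.mem_image, Vo,
    Set.mem_ofPred_eq]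
  constructor
  · rintro ⟨⟨x, -, rfl⟩ | h, hw⟩
    exacts [absurd ((isEvenSite_rhombusEvenSite h2 x).2 hη₀) hw, h]
  · rintro ⟨x, hx, rfl⟩
    exact ⟨Or.inr ⟨x, hx, rfl⟩, fun h => hη₀ ((isEvenSite_rhombusOddSite h2 x).1 h)⟩

lemma excess_rhombusRegion (h2 : 2 ∣ L) (hη₀ : η₀ ∈ Vo L) {n : ℕ} (hn : 2 * n ≤ L)
    {P Q : Finset (ℕ × ℕ)} (hP : P ⊆ box n) (hQ : Q ⊆ box n) :
    excess (rhombusRegion η₀ P Q) = (P.card : ℤ) - Q.card := by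
  rw [excess, rhombusRegion_inter_Ve h2 hη₀, rhombusRegion_inter_Vo h2 hη₀,
    ((rhombusEvenSite_injOn η₀ hn).mono (Finset.coe_subset.2 hP)).ncard_image,
    ((rhombusOddSite_injOn η₀ hn).mono (Finset.coe_subset.2 hQ)).ncard_image,
    Set.ncard_coe_finset, Set.ncard_coe_finset]

lemma rhombusND_eq_rhombusRegion (h2 : 2 ∣ L) {ℓ : ℕ} (hℓ : 1 ≤ ℓ) :
    rhombusND L η₀ ℓ ℓ = rhombusRegion η₀ (box (ℓ + 1)) (box ℓ) := by
  rw [rhombusND, rhombusRegion, Set.union_comm, Sset_eq_image, ← box]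
  congr 1
  ext w
  simp only [extBoundary, Set.mem_ofPred_eq, Set.mem_image, box, Finset.coe_product,
    Finset.coe_range, Set.mem_prod, Set.mem_Iio]
  constructor
  · rintro ⟨-, u, ⟨⟨k, j⟩, hkj, rfl⟩, hw⟩
    obtain ⟨a, ha, b, hb, rfl⟩ :=
      (adjacent_rhombusOddSite_iff η₀ (k, j) w).1 (adjacent_symm hw)
    exact ⟨(k + a, j + b), by simp only at hkj ⊢; omega, rfl⟩
  · rintro ⟨⟨p, q⟩, hpq, rfl⟩
    simp only at hpq
    refine ⟨fun ⟨y, _, hy⟩ => rhombusEvenSite_ne_rhombusOddSite h2 _ _ hy.symm, _,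
      ⟨(min p (ℓ - 1), min q (ℓ - 1)), by simp only; omega, rfl⟩, adjacent_symm
      ((adjacent_rhombusOddSite_iff η₀ _ _).2 ⟨p - min p (ℓ - 1), by omega,
        q - min q (ℓ - 1), by omega, by congr 2 <;> simp only <;> omega⟩)⟩

lemma exists_eq_pair_of_degRhombus (h2 : 2 ∣ L) {v : Site L} (hv : v ∈ Ve L)
    {D : Set (Site L)} (hD : D = degRhombus10 L v 1 ∨ D = degRhombus01 L v 1) :
    ∃ d ∈ Ve L, d ≠ v ∧ D = {v, d} := by
  have : Fact (1 < L) := ⟨by obtain ⟨k, rfl⟩ := h2; have := NeZero.ne (2 * k); omega⟩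
  have hne : ∀ t : ZMod L, ((v.1 + 1, t) : Site L) ≠ v := fun t h => by
    simpa using congrArg Prod.fst h
  rcases hD with rfl | rfl
  · refine ⟨(v.1 + 1, v.2 - 1), (isEvenSite_iff_of_sum_eq_add_two_mul h2 (s := 0)
      (by ring)).2 hv, hne _, ?_⟩
    ext w
    simp only [degRhombus10, Set.mem_ofPred_eq, Set.mem_insert_iff, Set.mem_singleton_iff]
    constructor
    · rintro ⟨k, hk, rfl⟩
      interval_cases k <;> simp
    · rintro (rfl | rfl)
      exacts [⟨0, zero_le_one, by simp⟩, ⟨1, le_rfl, by simp⟩]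
  · refine ⟨(v.1 + 1, v.2 + 1), (isEvenSite_iff_of_sum_eq_add_two_mul h2 (s := 1)
      (by ring)).2 hv, hne _, ?_⟩
    ext w
    simp only [degRhombus01, Set.mem_ofPred_eq, Set.mem_insert_iff, Set.mem_singleton_iff]
    constructor
    · rintro ⟨k, hk, rfl⟩
      interval_cases k <;> simp
    · rintro (rfl | rfl)
      exacts [⟨0, zero_le_one, by simp⟩, ⟨1, le_rfl, by simp⟩]

end Rhombus

section Grid

open Finset

/-- A pair `(P, Q)` stands for the region `rhombusRegion η₀ P Q`; the indices `y + (a, b)`,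
`a, b ≤ 1`, of an odd index `y` are those of the four neighbours of its site. -/
def GridStep (n : ℕ) (s t : Finset (ℕ × ℕ) × Finset (ℕ × ℕ)) : Prop :=
  t.1 ⊆ box n ∧ t.2 ⊆ box n ∧
  ((∃ x ∉ s.1, t = (insert x s.1, s.2)) ∨
    (∃ y ∉ s.2, t = (s.1, insert y s.2) ∧ ∀ a ≤ 1, ∀ b ≤ 1, (y.1 + a, y.2 + b) ∈ s.1))

def GridReach (n : ℕ) (c : ℤ) :
    Finset (ℕ × ℕ) × Finset (ℕ × ℕ) → Finset (ℕ × ℕ) × Finset (ℕ × ℕ) → Prop :=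
  Relation.ReflTransGen fun s t => GridStep n s t ∧ (t.1.card : ℤ) - t.2.card ≤ c

namespace GridReach

variable {n : ℕ} {c : ℤ} {s : Finset (ℕ × ℕ) × Finset (ℕ × ℕ)} {P P' Q Q' : Finset (ℕ × ℕ)}

lemma tail_even (h : GridReach n c s (P, Q)) {x : ℕ × ℕ} (hx : x ∉ P) (hP' : insert x P = P')
    (hP'n : P' ⊆ box n) (hQ : Q ⊆ box n) (hc : (P'.card : ℤ) - Q.card ≤ c) :
    GridReach n c s (P', Q) :=
  Relation.ReflTransGen.tail h ⟨⟨hP'n, hQ, Or.inl ⟨x, hx, by rw [hP']⟩⟩, hc⟩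

lemma tail_odd (h : GridReach n c s (P, Q)) {y : ℕ × ℕ} (hy : y ∉ Q) (hQ' : insert y Q = Q')
    (hP : P ⊆ box n) (hQ'n : Q' ⊆ box n) (hnbr : ∀ a ≤ 1, ∀ b ≤ 1, (y.1 + a, y.2 + b) ∈ P)
    (hc : (P.card : ℤ) - Q'.card ≤ c) :
    GridReach n c s (P, Q') :=
  Relation.ReflTransGen.tail h ⟨⟨hP, hQ'n, Or.inr ⟨y, hy, by rw [hQ'], hnbr⟩⟩, hc⟩

end GridReach

def stageEven (ℓ c j : ℕ) : Finset (ℕ × ℕ) := range (c + 1) ×ˢ range (ℓ + 1) ∪ {c + 1} ×ˢ range j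

def stageOdd (ℓ c j : ℕ) : Finset (ℕ × ℕ) := range c ×ˢ range ℓ ∪ {c} ×ˢ range j

variable {ℓ c j : ℕ}

lemma card_stageEven : (stageEven ℓ c j).card = (c + 1) * (ℓ + 1) + j := by
  rw [stageEven, card_union_of_disjoint (disjoint_left.2 fun x h1 h2 => by
    simp only [mem_product, mem_range, mem_singleton] at h1 h2; omega), card_product, card_product]
  simp

lemma card_stageOdd : (stageOdd ℓ c j).card = c * ℓ + j := by
  rw [stageOdd, card_union_of_disjoint (disjoint_left.2 fun x h1 h2 => by
    simp only [mem_product, mem_range, mem_singleton] at h1 h2; omega), card_product, card_product]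
  simp

lemma stageEven_subset_box (hc : c + 1 ≤ ℓ) (hj : j ≤ ℓ + 1) :
    stageEven ℓ c j ⊆ box (ℓ + 1) := by
  intro x; simp only [stageEven, box, mem_union, mem_product, mem_range, mem_singleton]; omega

lemma stageOdd_subset_box (hc : c + 1 ≤ ℓ) (hj : j ≤ ℓ + 1) : stageOdd ℓ c j ⊆ box (ℓ + 1) := by
  intro x; simp only [stageOdd, box, mem_union, mem_product, mem_range, mem_singleton]; omega

lemma insert_stageEven : insert (c + 1, j) (stageEven ℓ c j) = stageEven ℓ c (j + 1) := by
  ext ⟨a, b⟩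
  simp only [stageEven, mem_insert, mem_union, mem_product, mem_range, mem_singleton,
    Prod.mk.injEq]
  omega

lemma insert_stageOdd : insert (c, j) (stageOdd ℓ c j) = stageOdd ℓ c (j + 1) := by
  ext ⟨a, b⟩
  simp only [stageOdd, mem_insert, mem_union, mem_product, mem_range, mem_singleton,
    Prod.mk.injEq]
  omega

lemma gridReach_firstColumn (hj : j ≤ ℓ + 1) :
    GridReach (ℓ + 1) (2 * ℓ + 2) (∅, ∅) ({0} ×ˢ range j, ∅) := by
  induction j with
  | zero =>
    simp only [range_zero, product_empty]
    exact Relation.ReflTransGen.refl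
  | succ j ih =>
    refine (ih (by omega)).tail_even (x := (0, j)) (by simp)
      (by ext ⟨a, b⟩; simp only [mem_insert, mem_product, mem_singleton, mem_range,
        Prod.mk.injEq]; omega)
      (by intro x; simp only [box, mem_product, mem_singleton, mem_range]; omega)
      (empty_subset _) (by rw [card_product, card_singleton, card_range, card_empty]; omega)

lemma gridReach_column (hc : c + 1 ≤ ℓ) (hj : j ≤ ℓ) :
    GridReach (ℓ + 1) (2 * ℓ + 2) (stageEven ℓ c 0, stageOdd ℓ c 0)
      (stageEven ℓ c (j + 1), stageOdd ℓ c j) := by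
  have hcard : ∀ i k, k ≤ i → i ≤ k + 2 →
      ((stageEven ℓ c i).card : ℤ) - (stageOdd ℓ c k).card ≤ 2 * ℓ + 2 := by
    intro i k h1 h2
    rw [card_stageEven, card_stageOdd]; push_cast; linarith
  induction j with
  | zero =>
    exact GridReach.tail_even .refl (by simp [stageEven]) insert_stageEven
      (stageEven_subset_box hc (by omega)) (stageOdd_subset_box hc (by omega))
      (hcard _ _ (by omega) (by omega))
  | succ j ih =>
    have hmid : GridReach (ℓ + 1) (2 * ℓ + 2) (stageEven ℓ c 0, stageOdd ℓ c 0)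
        (stageEven ℓ c (j + 2), stageOdd ℓ c j) :=
      (ih (by omega)).tail_even (by simp [stageEven]) insert_stageEven
        (stageEven_subset_box hc (by omega)) (stageOdd_subset_box hc (by omega))
        (hcard _ _ (by omega) (by omega))
    refine hmid.tail_odd (by simp [stageOdd]) insert_stageOdd
      (stageEven_subset_box hc (by omega)) (stageOdd_subset_box hc (by omega)) ?_
      (hcard _ _ (by omega) (by omega))
    intro a ha b hb
    simp only [stageEven, mem_union, mem_product, mem_range, mem_singleton]
    omega

lemma gridReach_columns (hc : c ≤ ℓ) :
    GridReach (ℓ + 1) (2 * ℓ + 2) (∅, ∅) (stageEven ℓ c 0, stageOdd ℓ c 0) := by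
  induction c with
  | zero =>
    have hE : stageEven ℓ 0 0 = {0} ×ˢ range (ℓ + 1) := by ext ⟨a, b⟩; simp [stageEven]
    have hO : stageOdd ℓ 0 0 = ∅ := by simp [stageOdd]
    rw [hE, hO]
    exact gridReach_firstColumn le_rfl
  | succ c ih =>
    have hE : stageEven ℓ c (ℓ + 1) = stageEven ℓ (c + 1) 0 := by
      ext ⟨a, b⟩; simp only [stageEven, mem_union, mem_product, mem_range, mem_singleton]; omega
    have hO : stageOdd ℓ c ℓ = stageOdd ℓ (c + 1) 0 := by
      ext ⟨a, b⟩; simp only [stageOdd, mem_union, mem_product, mem_range, mem_singleton]; omega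
    rw [← hE, ← hO]
    exact (ih (by omega)).trans (gridReach_column (by omega) le_rfl)

lemma gridReach_rhombus (ℓ : ℕ) :
    GridReach (ℓ + 1) (2 * ℓ + 2) (∅, ∅) (box (ℓ + 1), box ℓ) := by
  have hE : stageEven ℓ ℓ 0 = box (ℓ + 1) := by simp [stageEven, box]
  have hO : stageOdd ℓ ℓ 0 = box ℓ := by simp [stageOdd, box]
  rw [← hE, ← hO]
  exact gridReach_columns le_rfl

end Grid

section RhombusGrowth

variable {L : ℕ} [NeZero L] {η₀ : Site L}

lemma growStep_rhombusRegion (h2 : 2 ∣ L) (hη₀ : η₀ ∈ Vo L) {n : ℕ} (hn : 2 * n ≤ L)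
    {s t : Finset (ℕ × ℕ) × Finset (ℕ × ℕ)} (h : GridStep n s t) :
    GrowStep (rhombusRegion η₀ s.1 s.2) (rhombusRegion η₀ t.1 t.2) := by
  obtain ⟨ht1, ht2, ⟨x, hx, rfl⟩ | ⟨y, hy, rfl, hnbr⟩⟩ := h
  · refine ⟨rhombusEvenSite η₀ x, ?_, ?_, fun hodd => ?_⟩
    · rintro (hP | ⟨z, -, hz⟩)
      · exact hx (((rhombusEvenSite_injOn η₀ hn).mem_image_iff
          (Finset.coe_subset.2 ((Finset.subset_insert _ _).trans ht1))
          (ht1 (Finset.mem_insert_self x _))).1 hP)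
      · exact rhombusEvenSite_ne_rhombusOddSite h2 x z hz.symm
    · simp only [rhombusRegion, Finset.coe_insert, Set.image_insert_eq, Set.insert_union]
    · exact absurd ((isEvenSite_rhombusEvenSite h2 x).2 hη₀) hodd
  · refine ⟨rhombusOddSite η₀ y, ?_, ?_, fun _ w hw => ?_⟩
    · rintro (⟨z, -, hz⟩ | hQ)
      · exact rhombusEvenSite_ne_rhombusOddSite h2 z y hz
      · exact hy (((rhombusOddSite_injOn η₀ hn).mem_image_iff
          (Finset.coe_subset.2 ((Finset.subset_insert _ _).trans ht2))
          (ht2 (Finset.mem_insert_self y _))).1 hQ)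
    · simp only [rhombusRegion, Finset.coe_insert, Set.image_insert_eq, Set.union_insert]
    · obtain ⟨a, ha, b, hb, rfl⟩ := (adjacent_rhombusOddSite_iff η₀ y w).1 hw
      exact Or.inl ⟨_, hnbr a ha b hb, rfl⟩

lemma growsWithin_rhombusRegion (h2 : 2 ∣ L) (hη₀ : η₀ ∈ Vo L) {n : ℕ} (hn : 2 * n ≤ L)
    {c : ℤ} {s t : Finset (ℕ × ℕ) × Finset (ℕ × ℕ)} (h : GridReach n c s t) :
    GrowsWithin c (rhombusRegion η₀ s.1 s.2) (rhombusRegion η₀ t.1 t.2) := by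
  refine Relation.ReflTransGen.lift (fun s : Finset (ℕ × ℕ) × Finset (ℕ × ℕ) =>
    rhombusRegion η₀ s.1 s.2) (fun s t hst => ⟨growStep_rhombusRegion h2 hη₀ hn hst.1, ?_⟩) _ _ h
  rw [excess_rhombusRegion h2 hη₀ hn hst.1.1 hst.1.2.1]
  exact hst.2

lemma excess_rhombusND (h2 : 2 ∣ L) (hη₀ : η₀ ∈ Vo L) {ℓ : ℕ} (hℓ : 1 ≤ ℓ)
    (hL : 2 * (ℓ + 1) = L) : excess (rhombusND L η₀ ℓ ℓ) = L - 1 := by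
  rw [rhombusND_eq_rhombusRegion h2 hℓ,
    excess_rhombusRegion h2 hη₀ hL.le subset_rfl (box_mono ℓ.le_succ)]
  simp only [box, Finset.card_product, Finset.card_range]
  push_cast [← hL]; ring

lemma growsWithin_rhombusND (h2 : 2 ∣ L) (hη₀ : η₀ ∈ Vo L) {ℓ : ℕ} (hℓ : 1 ≤ ℓ)
    (hL : 2 * (ℓ + 1) = L) : GrowsWithin (L : ℤ) ∅ (rhombusND L η₀ ℓ ℓ) := by
  have h := growsWithin_rhombusRegion h2 hη₀ hL.le (gridReach_rhombus ℓ)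
  rw [show (2 * ℓ + 2 : ℤ) = L by omega, ← rhombusND_eq_rhombusRegion h2 hℓ] at h
  simpa [rhombusRegion] using h

end RhombusGrowth

/-- **Optimal paths into `C_ir(e,o)`.** For every `η ∈ C_ir(e,o)` there is a
non-backtracking path from `e` to `η`, with consecutive configurations
differing in exactly one site, whose energy is maximal only at `η`; moreover
`H(η) = H(e) + L + 1`. -/
theorem path_to_Cir (L : ℕ) (hL : Even L) (hL6 : 6 ≤ L)
    (η : Site L → Bool) (hη : η ∈ Cir L) :
    ∃ ω : List (Site L → Bool),
      (∀ ξ ∈ ω, IsConfig L ξ) ∧ ω.Chain' (stepRel1 L) ∧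
      ω.head? = some (eCfg L) ∧ ω.getLast? = some η ∧
      NonBacktracking L ω ∧
      (∀ ξ ∈ ω, ξ ≠ η → energy L ξ < energy L η) ∧
      energy L η = energy L (eCfg L) + (L : ℤ) + 1 := by
  have : NeZero L := ⟨by omega⟩
  have h2 : 2 ∣ L := even_iff_two_dvd.1 hL
  obtain ⟨-, η₀, hη₀, v, hv, D, hD, hRD, -, -, hreg⟩ := hη
  obtain ⟨d, hd, hdv, rfl⟩ := exists_eq_pair_of_degRhombus h2 hv hD
  set R := rhombusND L η₀ (L / 2 - 1) (L / 2 - 1)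
  have hℓ : 2 * (L / 2 - 1 + 1) = L := by obtain ⟨k, hk⟩ := hL; omega
  have hexR : excess R = L - 1 := excess_rhombusND h2 hη₀ (by omega) hℓ
  have hvR : v ∉ R := fun h => Set.disjoint_left.1 hRD h (by simp)
  have hdR : d ∉ insert v R := by
    rintro (h | h)
    exacts [hdv h, Set.disjoint_left.1 hRD h (by simp)]
  have hgrow : GrowsWithin (L : ℤ) ∅ (insert v R) :=
    (growsWithin_rhombusND h2 hη₀ (by omega) hℓ).tail ⟨⟨v, hvR, rfl, fun hvo => absurd hv hvo⟩,
      by rw [excess_insert_of_isEvenSite hv hvR, hexR]; omega⟩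
  have hη' : η = regionCfg (insert d (insert v R)) := by
    rw [← regionCfg_oddRegion η, hreg]
    congr 1
    ext w; simp only [Set.mem_union, Set.mem_insert_iff, Set.mem_singleton_iff]; tauto
  have henη : energy L η = energy L (eCfg L) + L + 1 := by
    rw [hη', energy_regionCfg, excess_insert_of_isEvenSite hd hdR,
      excess_insert_of_isEvenSite hv hvR, hexR]
    ring
  obtain ⟨ω, hcfg, hchain, hhead, hlast, hnb, hen⟩ := exists_path_of_growsWithin h2
    (by positivity) hgrow ⟨d, hdR, rfl, fun hdo => absurd hd hdo⟩
  refine ⟨ω, hcfg, hchain, hhead, hη' ▸ hlast, hnb, fun ξ hξ hne => ?_, henη⟩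
  linarith [hen ξ hξ (hη' ▸ hne)]

end HardCoreGrid
end
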